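/- arXiv:1703.01952 — 2 statements merged into one kernel-verified Lean document; each statement's English description precedes it below -/
import Mathlib

section
/- Suppose V_λ = sup_x F_x(V_λ) and J = F_{x̂}(J), where x̂ is a maximizer of F_x(V_{λ,N}) (i.e., the greedy policy with respect to an approximation V_{λ,N}), each F_x is a (1-λ)-contraction in sup norm, and V_{λ,N+1} = sup_x F_x(V_{λ,N}). Then ‖V_λ - J‖_sup ≤ (2(1-λ)/λ) ‖V_λ - V_{λ,N}‖_sup. -/
/-- Greedy-policy performance bound: if `Vλ = sup_x F_x Vλ`, `x̂` is greedy w.r.t. the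
approximation `V_{λ,N}` (attaining the supremum defining `V_{λ,N+1}`), `J` is the value of
the stationary greedy policy (`J = F_{x̂} J`), and each `F_x` is a `(1-λ)`-contraction, then
`‖Vλ - J‖_sup ≤ (2(1-λ)/λ) ‖Vλ - V_{λ,N}‖_sup`. -/
theorem stmt3 {D X : Type*} [Nonempty D] [Nonempty X]
    (lam : ℝ) (hlam0 : 0 < lam) (hlam1 : lam < 1)
    (F : X → (D → ℝ) → (D → ℝ))
    (hF : ∀ (x : X) (V₁ V₂ : D → ℝ) (c : ℝ),
      (∀ d, |V₁ d - V₂ d| ≤ c) → ∀ d, |F x V₁ d - F x V₂ d| ≤ (1 - lam) * c)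
    (Vlam VN VN1 J : D → ℝ) (xhat : X)
    (hVlam : ∀ d, IsLUB (Set.range fun x => F x Vlam d) (Vlam d))
    (hVN1 : ∀ d, IsLUB (Set.range fun x => F x VN d) (VN1 d))
    (hgreedy : ∀ d, F xhat VN d = VN1 d)
    (hJ : ∀ d, F xhat J d = J d)
    (c : ℝ) (hc : ∀ d, |Vlam d - VN d| ≤ c)
    (cJ : ℝ) (hcJ : IsLUB (Set.range fun d => |Vlam d - J d|) cJ) :
    cJ ≤ (2 * (1 - lam) / lam) * c := by
  have hcJub : ∀ d, |Vlam d - J d| ≤ cJ := fun d => hcJ.1 ⟨d, rfl⟩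
  have h1 : ∀ d, |Vlam d - VN1 d| ≤ (1 - lam) * c := by
    intro d
    have hx : ∀ x, |F x Vlam d - F x VN d| ≤ (1 - lam) * c :=
      fun x => hF x Vlam VN c hc d
    rw [abs_sub_le_iff]
    constructor
    · have h : Vlam d ≤ VN1 d + (1 - lam) * c := by
        apply (hVlam d).2
        rintro _ ⟨x, rfl⟩
        have h2 := (hVN1 d).1 ⟨x, rfl⟩
        have h3 := (abs_sub_le_iff.mp (hx x)).1
        simp only at h2 ⊢
        linarith
      linarith
    · have h : VN1 d ≤ Vlam d + (1 - lam) * c := by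
        apply (hVN1 d).2
        rintro _ ⟨x, rfl⟩
        have h2 := (hVlam d).1 ⟨x, rfl⟩
        have h3 := (abs_sub_le_iff.mp (hx x)).2
        simp only at h2 ⊢
        linarith
      linarith
  have h2 : ∀ d, |VN1 d - F xhat Vlam d| ≤ (1 - lam) * c := by
    intro d
    have h := hF xhat VN Vlam c (fun d => by rw [abs_sub_comm]; exact hc d) d
    rwa [hgreedy d] at h
  have h3 : ∀ d, |F xhat Vlam d - J d| ≤ (1 - lam) * cJ := by
    intro d
    have h := hF xhat Vlam J cJ hcJub d
    rwa [hJ d] at h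
  have key : cJ ≤ 2 * (1 - lam) * c + (1 - lam) * cJ := by
    apply hcJ.2
    rintro _ ⟨d, rfl⟩
    have ha := h1 d; have hb := h2 d; have he := h3 d
    have t1 : |Vlam d - J d| ≤ |Vlam d - F xhat Vlam d| + |F xhat Vlam d - J d| :=
      abs_sub_le _ _ _
    have t2 : |Vlam d - F xhat Vlam d| ≤ |Vlam d - VN1 d| + |VN1 d - F xhat Vlam d| :=
      abs_sub_le _ _ _
    simp only
    linarith
  rw [div_mul_eq_mul_div, le_div_iff₀ hlam0]
  nlinarith [key]
end

section
/- For a stationary policy in a λ-discounted dual game, the security level satisfies the fixed-point equation J̃(w) = max_{a ∈ A} (1-λ) J̃((w + λ M_a y(w))/(1-λ)), where J̃(w) = max_{p∈Δ(K)} (J(p) + pᵀw), J(p) = max_σ γ_λ(p, σ, τ), and τ is the stationary strategy playing y(w_t) ∈ Δ(B) as a function of the anti-discounted regret state w_t. (Abstract version: if J̃ is the dual transform of a λ-discounted best-response value and the dynamics of w follow the anti-discounted recursion, then J̃ = F̃_{y(w)}(J̃) pointwise.) -/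
open scoped BigOperators

variable {K A B : Type*}

/-- Trajectory of the anti-discounted regret state under a stationary uninformed-player
policy `y` (function of the regret state) and an informed player's action sequence `a`. -/
noncomputable def regretTraj [Fintype B] (lam : ℝ) (M : K → A → B → ℝ)
    (y : (K → ℝ) → B → ℝ) (w : K → ℝ) (a : ℕ → A) (t : ℕ) : K → ℝ :=
  Nat.rec (motive := fun _ => K → ℝ) w
    (fun t prev k => (prev k + lam * ∑ b, M k (a t) b * y prev b) / (1 - lam)) t

lemma regretTraj_shift [Fintype B] (lam : ℝ) (M : K → A → B → ℝ)
    (y : (K → ℝ) → B → ℝ) (w : K → ℝ) (a : ℕ → A) (t : ℕ) :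
    regretTraj lam M y w a (t + 1)
      = regretTraj lam M y
          (fun k => (w k + lam * ∑ b, M k (a 0) b * y w b) / (1 - lam))
          (fun n => a (n + 1)) t := by
  induction t with
  | zero => rfl
  | succ t ih =>
      have h : regretTraj lam M y w a (t + 2)
          = fun k => (regretTraj lam M y w a (t + 1) k
              + lam * ∑ b, M k (a (t + 1)) b * y (regretTraj lam M y w a (t + 1)) b)
                / (1 - lam) := rfl
      rw [h, ih]; rfl

lemma abs_pay_le [Fintype B] {M : K → A → B → ℝ} {C : ℝ} (hM : ∀ k a b, |M k a b| ≤ C)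
    {y : (K → ℝ) → B → ℝ} (hy : ∀ w, y w ∈ stdSimplex ℝ B)
    (k : K) (a : A) (v : K → ℝ) :
    |∑ b, M k a b * y v b| ≤ C := by
  calc |∑ b, M k a b * y v b| ≤ ∑ b, |M k a b * y v b| :=
        Finset.abs_sum_le_sum_abs _ _
    _ ≤ ∑ b, C * y v b := by
        refine Finset.sum_le_sum fun b _ => ?_
        rw [abs_mul, abs_of_nonneg ((hy v).1 b)]
        exact mul_le_mul_of_nonneg_right (hM k a b) ((hy v).1 b)
    _ = C := by rw [← Finset.mul_sum, (hy v).2, mul_one]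

lemma summable_pay [Fintype B] {lam : ℝ} (hlam0 : 0 < lam) (hlam1 : lam < 1)
    {M : K → A → B → ℝ} {C : ℝ} (hM : ∀ k a b, |M k a b| ≤ C)
    {y : (K → ℝ) → B → ℝ} (hy : ∀ w, y w ∈ stdSimplex ℝ B)
    (w : K → ℝ) (a : ℕ → A) (k : K) :
    Summable (fun t : ℕ => lam * (1 - lam) ^ t *
      ∑ b, M k (a t) b * y (regretTraj lam M y w a t) b) := by
  have h0 : (0:ℝ) ≤ 1 - lam := by linarith
  have h1 : (1:ℝ) - lam < 1 := by linarith
  refine Summable.of_norm_bounded (g := fun t => lam * (1 - lam) ^ t * C)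
    (((summable_geometric_of_lt_one h0 h1).mul_left lam).mul_right C) fun t => ?_
  have hnn : 0 ≤ lam * (1 - lam) ^ t := mul_nonneg hlam0.le (pow_nonneg h0 t)
  rw [Real.norm_eq_abs, abs_mul, abs_of_nonneg hnn]
  exact mul_le_mul_of_nonneg_left (abs_pay_le hM hy k (a t) _) hnn

lemma payoff_shift [Fintype B] {lam : ℝ} (hlam0 : 0 < lam) (hlam1 : lam < 1)
    {M : K → A → B → ℝ} {C : ℝ} (hM : ∀ k a b, |M k a b| ≤ C)
    {y : (K → ℝ) → B → ℝ} (hy : ∀ w, y w ∈ stdSimplex ℝ B)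
    (w : K → ℝ) (a : ℕ → A) (k : K) :
    w k + ∑' t : ℕ, lam * (1 - lam) ^ t *
        ∑ b, M k (a t) b * y (regretTraj lam M y w a t) b
      = (1 - lam) *
        ((fun k => (w k + lam * ∑ b, M k (a 0) b * y w b) / (1 - lam)) k
          + ∑' t : ℕ, lam * (1 - lam) ^ t *
            ∑ b, M k (a (t + 1)) b *
              y (regretTraj lam M y
                  (fun k => (w k + lam * ∑ b, M k (a 0) b * y w b) / (1 - lam))
                  (fun n => a (n + 1)) t) b) := by
  have h1 : (1:ℝ) - lam ≠ 0 := by intro h; linarith [h]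
  have hs := summable_pay hlam0 hlam1 hM hy w a k
  rw [Summable.tsum_eq_zero_add hs]
  have hterm : ∀ t : ℕ, lam * (1 - lam) ^ (t + 1) *
        ∑ b, M k (a (t + 1)) b * y (regretTraj lam M y w a (t + 1)) b
      = (1 - lam) * (lam * (1 - lam) ^ t *
        ∑ b, M k (a (t + 1)) b *
          y (regretTraj lam M y
              (fun k => (w k + lam * ∑ b, M k (a 0) b * y w b) / (1 - lam))
              (fun n => a (n + 1)) t) b) := by
    intro t
    rw [regretTraj_shift, pow_succ]
    ring
  calc w k + (lam * (1 - lam) ^ 0 *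
        ∑ b, M k (a 0) b * y (regretTraj lam M y w a 0) b
        + ∑' t : ℕ, lam * (1 - lam) ^ (t + 1) *
            ∑ b, M k (a (t + 1)) b * y (regretTraj lam M y w a (t + 1)) b)
      = w k + lam * ∑ b, M k (a 0) b * y w b
        + (1 - lam) * ∑' t : ℕ, lam * (1 - lam) ^ t *
            ∑ b, M k (a (t + 1)) b *
              y (regretTraj lam M y
                  (fun k => (w k + lam * ∑ b, M k (a 0) b * y w b) / (1 - lam))
                  (fun n => a (n + 1)) t) b := by
        simp only [hterm, tsum_mul_left, pow_zero, mul_one,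
          show regretTraj lam M y w a 0 = w from rfl]
        ring
    _ = _ := by
        field_simp

/-- For a stationary policy `y(w)` in the λ-discounted dual game, the security level
`J̃(w) = sup_{k, (a_t)} (w^k + ∑_t λ(1-λ)^{t-1} M^k_{a_t,:} y(w_t))` satisfies the
fixed-point equation `J̃(w) = (1-λ) max_{a∈A} J̃((w + λ M_a y(w))/(1-λ))`. -/
theorem stmt18 [Fintype K] [Fintype A] [Fintype B] [Nonempty K] [Nonempty A]
    (lam : ℝ) (hlam0 : 0 < lam) (hlam1 : lam < 1)
    (M : K → A → B → ℝ) (C : ℝ) (hM : ∀ k a b, |M k a b| ≤ C)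
    (y : (K → ℝ) → B → ℝ) (hy : ∀ w, y w ∈ stdSimplex ℝ B)
    (tJ : (K → ℝ) → ℝ)
    (htJ : ∀ w : K → ℝ,
      IsLUB (Set.range fun ka : K × (ℕ → A) =>
        w ka.1 + ∑' t : ℕ, lam * (1 - lam) ^ t *
          ∑ b, M ka.1 (ka.2 t) b * y (regretTraj lam M y w ka.2 t) b) (tJ w)) :
    ∀ w : K → ℝ,
      tJ w = (1 - lam) * (Finset.univ.sup' Finset.univ_nonempty fun a₀ : A =>
        tJ fun k => (w k + lam * ∑ b, M k a₀ b * y w b) / (1 - lam)) := by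
  intro w
  have h1pos : (0:ℝ) < 1 - lam := by linarith
  set W : A → (K → ℝ) :=
    fun a₀ k => (w k + lam * ∑ b, M k a₀ b * y w b) / (1 - lam) with hW
  apply le_antisymm
  · -- tJ w ≤ RHS
    apply (htJ w).2
    rintro x ⟨⟨k, a⟩, rfl⟩
    dsimp only
    have hshift := payoff_shift hlam0 hlam1 hM hy w a k
    simp only at hshift
    rw [hshift]
    have hle : (W (a 0) k + ∑' t : ℕ, lam * (1 - lam) ^ t *
          ∑ b, M k (a (t + 1)) b *
            y (regretTraj lam M y (W (a 0)) (fun n => a (n + 1)) t) b)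
        ≤ tJ (W (a 0)) := (htJ (W (a 0))).1 ⟨⟨k, fun n => a (n + 1)⟩, rfl⟩
    refine mul_le_mul_of_nonneg_left (hle.trans ?_) h1pos.le
    exact Finset.le_sup' (fun a₀ : A => tJ (W a₀)) (Finset.mem_univ (a 0))
  · -- RHS ≤ tJ w
    have hdiv : ∀ a₀ : A, tJ (W a₀) ≤ tJ w / (1 - lam) := by
      intro a₀
      apply (htJ (W a₀)).2
      rintro x ⟨⟨k, a'⟩, rfl⟩
      dsimp only
      set a : ℕ → A := fun n => Nat.casesOn n a₀ (fun m => a' m) with ha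
      have hshift := payoff_shift hlam0 hlam1 hM hy w a k
      rw [le_div_iff₀ h1pos, mul_comm]
      have hx : (1 - lam) * (W a₀ k + ∑' t : ℕ, lam * (1 - lam) ^ t *
            ∑ b, M k (a' t) b * y (regretTraj lam M y (W a₀) a' t) b)
          = w k + ∑' t : ℕ, lam * (1 - lam) ^ t *
              ∑ b, M k (a t) b * y (regretTraj lam M y w a t) b := by
        rw [hshift]; rfl
      rw [hx]
      exact (htJ w).1 ⟨⟨k, a⟩, rfl⟩
    calc (1 - lam) * (Finset.univ.sup' Finset.univ_nonempty fun a₀ : A => tJ (W a₀))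
        ≤ (1 - lam) * (tJ w / (1 - lam)) := by
          refine mul_le_mul_of_nonneg_left ?_ h1pos.le
          exact Finset.sup'_le _ _ fun a₀ _ => hdiv a₀
      _ = tJ w := by field_simp
end
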